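/- Let λ ∈ ℝ with λ ≠ 0 and n ∈ ℕ with n ≥ 1. For every x > 0 with x > |λ|, the n-th derivative at x of the function x ↦ (1 + λ/x)^{1/λ} equals (−1)^n · x^{−n} · (1 + λ/x)^{1/λ} · Σ_{l=1}^{n} C(n−1, l−1)·C(n, l)·(1)_{l,λ}·(n−l)! · (1/(x + λ))^{l}. -/

import Mathlib

/-!
Write `e(x) = (1 + λ/x)^{1/λ}` and `t = 1/(x + λ)`. Then `e' = -e / (x (x + λ))` and `dt/dx = -t²`,
and since `x t = 1 - λ t`, differentiating `(-1)ⁿ x⁻ⁿ e(x) Pₙ(t)` gives `(-1)ⁿ⁺¹ x⁻ⁿ⁻¹ e(x) Pₙ₊₁(t)`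
with `Pₙ₊₁ = (n + X) Pₙ + X (1 - λX) Pₙ'`. On coefficients this recursion is the recursion
`L(n+1, l+1) = (n + l + 1) L(n, l+1) + L(n, l)` of the unsigned Lah numbers, twisted by
`(1)_{l+1,λ} = (1)_{l,λ} (1 - lλ)`; so `Pₙ = ∑ₗ L(n, l) (1)_{l,λ} Xˡ`, and
`L(n, l) = C(n-1, l-1) n! / l! = C(n-1, l-1) C(n, l) (n-l)!`.
-/

/-- The degenerate falling factorial `(1)_{m,λ} = ∏_{j=0}^{m-1} (1 - jλ)`. -/
noncomputable def degFall (lam : ℝ) (m : ℕ) : ℝ :=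
  ∏ j ∈ Finset.range m, (1 - (j : ℝ) * lam)

open Nat Polynomial Filter

def lah : ℕ → ℕ → ℕ
  | 0, 0 => 1
  | 0, _ + 1 => 0
  | _ + 1, 0 => 0
  | n + 1, k + 1 => (n + k + 1) * lah n (k + 1) + lah n k

theorem lah_succ_zero (n : ℕ) : lah (n + 1) 0 = 0 := rfl

theorem lah_succ_succ (n k : ℕ) :
    lah (n + 1) (k + 1) = (n + k + 1) * lah n (k + 1) + lah n k := rfl

theorem lah_eq_zero_of_lt {n k : ℕ} (h : n < k) : lah n k = 0 := by
  induction n generalizing k with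
  | zero => obtain ⟨k, rfl⟩ := Nat.exists_eq_add_of_lt h; rfl
  | succ n ih =>
    obtain ⟨k, rfl⟩ := Nat.exists_eq_succ_of_ne_zero (by omega : k ≠ 0)
    rw [lah_succ_succ, ih (by omega), ih (by omega)]
    rfl

theorem choose_succ_succ_mul_add_two (n k : ℕ) :
    (n + 1).choose (k + 1) * (n + 2) = n.choose (k + 1) * (n + k + 3) + n.choose k * (k + 2) := by
  have h := Nat.choose_succ_right_eq n k
  rw [Nat.choose_succ_succ]
  rcases le_or_gt k n with hk | hk
  · obtain ⟨d, rfl⟩ := Nat.exists_eq_add_of_le hk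
    rw [Nat.add_sub_cancel_left] at h
    nlinarith
  · simp [Nat.choose_eq_zero_of_lt hk, Nat.choose_eq_zero_of_lt (hk.trans (Nat.lt_succ_self k))]

theorem lah_succ_succ_mul_factorial (n k : ℕ) :
    lah (n + 1) (k + 1) * (k + 1)! = n.choose k * (n + 1)! := by
  induction n generalizing k with
  | zero => cases k <;> simp [lah]
  | succ n ih =>
    cases k with
    | zero =>
      have h0 := ih 0
      simp only [zero_add, Nat.factorial_one, mul_one, Nat.choose_zero_right, one_mul] at h0 ⊢
      rw [lah_succ_succ, lah_succ_zero, h0, Nat.factorial_succ (n + 1)]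
      ring
    | succ k =>
      rw [lah_succ_succ, Nat.factorial_succ (n + 1)]
      calc _ = (n + k + 3) * (lah (n + 1) (k + 2) * (k + 2)!)
                + (k + 2) * (lah (n + 1) (k + 1) * (k + 1)!) := by
            rw [Nat.factorial_succ (k + 1)]; ring
        _ = ((n + 1).choose (k + 1) * (n + 2)) * (n + 1)! := by
            rw [ih, ih, choose_succ_succ_mul_add_two]; ring
        _ = _ := by ring

theorem lah_eq_choose_mul_choose_mul_factorial {n k : ℕ} (hk : 1 ≤ k) (hkn : k ≤ n) :
    lah n k = (n - 1).choose (k - 1) * n.choose k * (n - k)! := by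
  obtain ⟨m, rfl⟩ := Nat.exists_eq_add_of_le' (hk.trans hkn)
  obtain ⟨j, rfl⟩ := Nat.exists_eq_add_of_le' hk
  refine Nat.eq_of_mul_eq_mul_right (Nat.factorial_pos (j + 1)) ?_
  rw [lah_succ_succ_mul_factorial, ← Nat.choose_mul_factorial_mul_factorial hkn]
  simp only [Nat.add_sub_cancel]
  ring

theorem degFall_succ (lam : ℝ) (m : ℕ) : degFall lam (m + 1) = degFall lam m * (1 - m * lam) :=
  Finset.prod_range_succ _ _

theorem Polynomial.coeff_X_mul_derivative {R : Type*} [CommSemiring R] (p : R[X]) (n : ℕ) :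
    (X * derivative p).coeff n = n * p.coeff n := by
  cases n with
  | zero => simp
  | succ n => rw [coeff_X_mul, coeff_derivative]; push_cast; ring

noncomputable def degLahPoly (lam : ℝ) : ℕ → ℝ[X]
  | 0 => 1
  | n + 1 => (C (n : ℝ) + X) * degLahPoly lam n
      + X * (1 - C lam * X) * derivative (degLahPoly lam n)

theorem coeff_degLahPoly (lam : ℝ) (n l : ℕ) :
    (degLahPoly lam n).coeff l = lah n l * degFall lam l := by
  induction n generalizing l with
  | zero => cases l <;> simp [degLahPoly, lah, degFall, coeff_one]
  | succ n ih =>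
    have hrec : degLahPoly lam (n + 1) = C (n : ℝ) * degLahPoly lam n + X * degLahPoly lam n
        + X * derivative (degLahPoly lam n)
        - C lam * (X * (X * derivative (degLahPoly lam n))) := by
      rw [degLahPoly]; ring
    cases l with
    | zero => cases n <;> simp [hrec, ih, lah_succ_zero]
    | succ l =>
      simp only [hrec, coeff_add, coeff_sub, coeff_C_mul, coeff_X_mul, coeff_X_mul_derivative,
        coeff_derivative, ih, lah_succ_succ, degFall_succ]
      push_cast
      ring

theorem natDegree_degLahPoly_le (lam : ℝ) (n : ℕ) : (degLahPoly lam n).natDegree ≤ n :=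
  natDegree_le_iff_coeff_eq_zero.2 fun l hl => by
    rw [coeff_degLahPoly, lah_eq_zero_of_lt hl, Nat.cast_zero, zero_mul]

theorem eval_degLahPoly (lam t : ℝ) (n : ℕ) :
    (degLahPoly lam n).eval t = ∑ l ∈ Finset.range (n + 1), lah n l * degFall lam l * t ^ l := by
  simp only [eval_eq_sum_range' (Nat.lt_succ_of_le (natDegree_degLahPoly_le lam n)),
    coeff_degLahPoly]

theorem hasDerivAt_degExp_inv {lam x : ℝ} (hlam : lam ≠ 0) (hx : x ≠ 0) (hxl : x + lam ≠ 0) :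
    HasDerivAt (fun y : ℝ => (1 + lam / y) ^ (1 / lam))
      (-((1 + lam / x) ^ (1 / lam) * x⁻¹ * (x + lam)⁻¹)) x := by
  have hbase : 1 + lam / x ≠ 0 := by
    rw [one_add_div hx]; exact div_ne_zero hxl hx
  have hinner : HasDerivAt (fun y : ℝ => 1 + lam / y) (lam * -(x ^ 2)⁻¹) x := by
    simpa only [div_eq_mul_inv] using ((hasDerivAt_inv hx).const_mul lam).const_add 1
  convert hinner.rpow_const (p := 1 / lam) (.inl hbase) using 1
  rw [Real.rpow_sub_one hbase]
  field_simp

theorem hasDerivAt_degExp_inv_mul_eval_degLahPoly {lam x : ℝ} (hlam : lam ≠ 0) (hx : x ≠ 0)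
    (hxl : x + lam ≠ 0) (n : ℕ) :
    HasDerivAt (fun y : ℝ => (-1) ^ n * y ^ (-(n : ℤ)) * (1 + lam / y) ^ (1 / lam) *
        (degLahPoly lam n).eval (y + lam)⁻¹)
      ((-1) ^ (n + 1) * x ^ (-((n + 1 : ℕ) : ℤ)) * (1 + lam / x) ^ (1 / lam) *
        (degLahPoly lam (n + 1)).eval (x + lam)⁻¹) x := by
  have hpow := hasDerivAt_zpow (-(n : ℤ)) x (.inl hx)
  have heval := ((degLahPoly lam n).hasDerivAt (x + lam)⁻¹).comp x
    (((hasDerivAt_id x).add_const lam).inv hxl)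
  refine (((hpow.const_mul ((-1 : ℝ) ^ n)).mul (hasDerivAt_degExp_inv hlam hx hxl)).mul heval
    ).congr_deriv ?_
  rw [degLahPoly.eq_2, zpow_sub_one₀ hx, Nat.cast_succ, neg_add, zpow_add₀ hx, zpow_neg_one]
  simp only [eval_add, eval_mul, eval_C, eval_X, eval_sub, eval_one, Function.comp_apply,
    Pi.mul_apply, Pi.inv_apply, id, Int.cast_neg, Int.cast_natCast]
  generalize (1 + lam / x) ^ (1 / lam) = e
  generalize (degLahPoly lam n).eval (x + lam)⁻¹ = p
  generalize (derivative (degLahPoly lam n)).eval (x + lam)⁻¹ = dp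
  field_simp
  ring

theorem iteratedDeriv_degExp_inv {lam : ℝ} (hlam : lam ≠ 0) (n : ℕ) {x : ℝ} (hx : x ≠ 0)
    (hxl : x + lam ≠ 0) :
    iteratedDeriv n (fun y : ℝ => (1 + lam / y) ^ (1 / lam)) x =
      (-1) ^ n * x ^ (-(n : ℤ)) * (1 + lam / x) ^ (1 / lam) *
        (degLahPoly lam n).eval (x + lam)⁻¹ := by
  induction n generalizing x with
  | zero => simp [degLahPoly]
  | succ n ih =>
    have hnear : iteratedDeriv n (fun y : ℝ => (1 + lam / y) ^ (1 / lam)) =ᶠ[nhds x]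
        fun y => (-1) ^ n * y ^ (-(n : ℤ)) * (1 + lam / y) ^ (1 / lam) *
          (degLahPoly lam n).eval (y + lam)⁻¹ := by
      filter_upwards [eventually_ne_nhds hx,
        (continuous_add_const lam).continuousAt.eventually_ne hxl] with y hy hyl using ih hy hyl
    rw [iteratedDeriv_succ, hnear.deriv_eq]
    exact (hasDerivAt_degExp_inv_mul_eval_degLahPoly hlam hx hxl n).deriv

/-- Corollary: for `n ≥ 1`,
`dⁿ/dxⁿ e_λ(1/x) = (−1)ⁿ x^{−n} e_λ(1/x) ∑_{l=1}^n C(n−1,l−1) C(n,l) (1)_{l,λ} (n−l)! (1/(x+λ))^l`,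
where `e_λ(1/x) = (1 + λ/x)^{1/λ}`. -/
theorem iteratedDeriv_degExp_inv_binom (lam : ℝ) (hlam : lam ≠ 0) (n : ℕ) (hn : 1 ≤ n) :
    ∀ x : ℝ, 0 < x → |lam| < x →
      iteratedDeriv n (fun y : ℝ => (1 + lam / y) ^ (1 / lam)) x =
        (-1 : ℝ) ^ n * x ^ (-(n : ℝ)) * (1 + lam / x) ^ (1 / lam) *
          ∑ l ∈ Finset.Icc 1 n,
            (Nat.choose (n - 1) (l - 1) : ℝ) * (Nat.choose n l : ℝ) * degFall lam l *
              (Nat.factorial (n - l) : ℝ) * (1 / (x + lam)) ^ l := by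
  intro x hx hlx
  have hxl : 0 < x + lam := by linarith [neg_abs_le lam]
  obtain ⟨m, rfl⟩ := Nat.exists_eq_add_of_le' hn
  rw [iteratedDeriv_degExp_inv hlam _ hx.ne' hxl.ne', eval_degLahPoly,
    Finset.sum_range_eq_add_Ico _ (by omega : 0 < m + 1 + 1), Finset.Ico_add_one_right_eq_Icc,
    lah_succ_zero, ← Real.rpow_intCast]
  push_cast
  simp only [zero_mul, zero_add, one_div]
  congr 1
  refine Finset.sum_congr rfl fun l hl => ?_
  obtain ⟨hl1, hln⟩ := Finset.mem_Icc.1 hl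
  rw [lah_eq_choose_mul_choose_mul_factorial hl1 hln]
  push_cast
  ring
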